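/- arXiv:2602.12211 — 3 statements merged into one kernel-verified Lean document; each statement's English description precedes it below -/
import Mathlib

section
/- Let n ≤ m be positive integers and let f : ℝⁿ → ℝ be a smooth function. Assume that the set D = {x ∈ ℝⁿ | f(x) > 0} is nonempty, that the zero set {x | f(x) = 0} equals closure(D) \ D, and that for every x with f(x) = 0 the Fréchet derivative of f at x is nonzero. Define F : ℝⁿ × ℝ^{m−n+1} → ℝ by F(x,y) = f(x) − Σ_{j=1}^{m−n+1} y_j². Then for every point (x,y) with F(x,y) = 0, the Fréchet derivative of F at (x,y) is a nonzero (equivalently, surjective) continuous linear map to ℝ; that is, F is a submersion at every point of its zero set M_{D,S} = F⁻¹({0}). -/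
/-- Regularity content of Theorem 5: `F(x,y) = f(x) - Σ y_j²` is a submersion at
every point of its zero set `M_{D,S} = F⁻¹({0})`. -/
theorem stmt_0 (n m : ℕ) (hn : 0 < n) (hnm : n ≤ m)
    (f : EuclideanSpace ℝ (Fin n) → ℝ) (hf : ContDiff ℝ (⊤ : ℕ∞) f)
    (hD : {x : EuclideanSpace ℝ (Fin n) | 0 < f x}.Nonempty)
    (hzero : {x : EuclideanSpace ℝ (Fin n) | f x = 0} =
      closure {x : EuclideanSpace ℝ (Fin n) | 0 < f x} \
        {x : EuclideanSpace ℝ (Fin n) | 0 < f x})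
    (hreg : ∀ x : EuclideanSpace ℝ (Fin n), f x = 0 → fderiv ℝ f x ≠ 0) :
    ∀ p : EuclideanSpace ℝ (Fin n) × EuclideanSpace ℝ (Fin (m - n + 1)),
      f p.1 - ∑ j, (p.2 j) ^ 2 = 0 →
      fderiv ℝ (fun q : EuclideanSpace ℝ (Fin n) × EuclideanSpace ℝ (Fin (m - n + 1)) =>
        f q.1 - ∑ j, (q.2 j) ^ 2) p ≠ 0 := by
  intro p hp
  have hk : True := trivial
  -- derivative of g y = ∑ (y j)^2
  have hg : HasFDerivAt (fun y : EuclideanSpace ℝ (Fin (m - n + 1)) => ∑ j, (y j) ^ 2)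
      (∑ j, (2 * p.2 j) • (EuclideanSpace.proj j : EuclideanSpace ℝ (Fin (m - n + 1)) →L[ℝ] ℝ)) p.2 := by
    apply HasFDerivAt.fun_sum
    intro j _
    have h1 : HasFDerivAt (fun y : EuclideanSpace ℝ (Fin (m - n + 1)) => y j)
        (EuclideanSpace.proj j : EuclideanSpace ℝ (Fin (m - n + 1)) →L[ℝ] ℝ) p.2 :=
      (EuclideanSpace.proj j : EuclideanSpace ℝ (Fin (m - n + 1)) →L[ℝ] ℝ).hasFDerivAt
    have h2 := h1.fun_mul h1
    have : (fun y : EuclideanSpace ℝ (Fin (m - n + 1)) => (y j) ^ 2)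
        = fun y => y j * y j := by funext y; ring
    rw [this]
    convert h2 using 1
    ext v
    simp [two_mul]
    rw [two_mul, add_smul]
  have hfd : HasFDerivAt f (fderiv ℝ f p.1) p.1 :=
    (hf.differentiable (by simp) p.1).hasFDerivAt
  have hF : HasFDerivAt (fun q : EuclideanSpace ℝ (Fin n) × EuclideanSpace ℝ (Fin (m - n + 1)) =>
      f q.1 - ∑ j, (q.2 j) ^ 2)
      ((fderiv ℝ f p.1).comp (ContinuousLinearMap.fst ℝ _ _) -
        (∑ j, (2 * p.2 j) • (EuclideanSpace.proj j : EuclideanSpace ℝ (Fin (m - n + 1)) →L[ℝ] ℝ)).comp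
          (ContinuousLinearMap.snd ℝ _ _)) p :=
    (hfd.comp p (hasFDerivAt_fst)).sub (hg.comp p (hasFDerivAt_snd))
  rw [hF.fderiv]
  by_cases hy : ∀ j, p.2 j = 0
  · have hsum : (∑ j, (p.2 j) ^ 2) = 0 := by
      apply Finset.sum_eq_zero; intro j _; simp [hy j]
    have hfx : f p.1 = 0 := by linarith [hp, hsum]
    obtain ⟨v, hv⟩ : ∃ v, fderiv ℝ f p.1 v ≠ 0 := by
      by_contra h
      push_neg at h
      exact hreg p.1 hfx (ContinuousLinearMap.ext fun v => by simp [h v])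
    intro hL
    have := DFunLike.congr_fun hL (v, 0)
    simp [ContinuousLinearMap.sum_apply, hy] at this
    exact hv this
  · push_neg at hy
    obtain ⟨j, hj⟩ := hy
    intro hL
    have := DFunLike.congr_fun hL (0, EuclideanSpace.single j 1)
    simp [ContinuousLinearMap.sum_apply, 
      EuclideanSpace.single_apply, Finset.sum_ite_eq, map_zero] at this
    exact hj this
end

section
/- Let m ≥ 3 be an integer, let I be a nonempty finite index set, and let h_i : ℝ² → ℝ (i ∈ I) be smooth functions such that: the zero sets {(s,t) | h_i(s,t) = 0} are pairwise disjoint; each zero set is contained in the half-plane {(s,t) | s > 0}; and each h_i has nonzero Fréchet derivative at every point of its zero set. Define Φ : ℝ^{m+1} → ℝ by Φ(x₁,…,x_{m+1}) = ∏_{i ∈ I} h_i(Σ_{j=1}^{m−1} x_j², x_m) − x_{m+1}². Then Φ has nonzero (equivalently, surjective) Fréchet derivative at every point of its zero set Φ⁻¹({0}); that is, Φ is a submersion along its zero set. -/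
/-- Regularity of `Φ(x₁,…,x_{m+1}) = ∏ᵢ hᵢ(Σ_{j=1}^{m-1} x_j², x_m) − x_{m+1}²`
along its zero set (identifying `ℝ^{m+1} ≅ ℝ^{m-1} × ℝ × ℝ`), when the zero sets of
the `hᵢ` are pairwise disjoint, contained in the half-plane `{s > 0}`, and each `hᵢ`
is regular along its zero set. This is the regularity content of Main Theorem 1. -/
theorem stmt_8 (m : ℕ) (hm : 3 ≤ m) {ι : Type*} [Fintype ι] [Nonempty ι]
    (h : ι → ℝ × ℝ → ℝ) (hsm : ∀ i, ContDiff ℝ (⊤ : ℕ∞) (h i))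
    (hdisj : ∀ i i', i ≠ i' → ∀ p : ℝ × ℝ, h i p = 0 → h i' p ≠ 0)
    (hpos : ∀ i (p : ℝ × ℝ), h i p = 0 → 0 < p.1)
    (hreg : ∀ i (p : ℝ × ℝ), h i p = 0 → fderiv ℝ (h i) p ≠ 0) :
    ∀ q : EuclideanSpace ℝ (Fin (m - 1)) × ℝ × ℝ,
      (∏ i, h i (∑ j, (q.1 j) ^ 2, q.2.1)) - q.2.2 ^ 2 = 0 →
      fderiv ℝ (fun q : EuclideanSpace ℝ (Fin (m - 1)) × ℝ × ℝ =>
        (∏ i, h i (∑ j, (q.1 j) ^ 2, q.2.1)) - q.2.2 ^ 2) q ≠ 0 := by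
  classical
  intro q hq
  set p : ℝ × ℝ := (∑ j, (q.1 j) ^ 2, q.2.1) with hp
  -- derivative of the sum of squares
  have hs1 : HasFDerivAt (fun a : EuclideanSpace ℝ (Fin (m - 1)) => ∑ j, a j ^ 2)
      (∑ j, ((2 : ℝ) * q.1 j) • (EuclideanSpace.proj j : EuclideanSpace ℝ (Fin (m - 1)) →L[ℝ] ℝ)) q.1 := by
    have : (fun a : EuclideanSpace ℝ (Fin (m - 1)) => ∑ j, a j ^ 2) = fun a : EuclideanSpace ℝ (Fin (m - 1)) => ∑ j, a j * a j := by
      ext a; simp [sq]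
    rw [this]
    apply HasFDerivAt.fun_sum
    intro j _
    have hj := (EuclideanSpace.proj (𝕜 := ℝ) j).hasFDerivAt (x := q.1)
    have := hj.fun_mul hj
    simpa [two_mul, add_smul, smul_smul] using this
  set Ds : EuclideanSpace ℝ (Fin (m - 1)) →L[ℝ] ℝ := ∑ j, ((2 : ℝ) * q.1 j) • (EuclideanSpace.proj j : EuclideanSpace ℝ (Fin (m - 1)) →L[ℝ] ℝ)
    with hDs
  set DF : (EuclideanSpace ℝ (Fin (m - 1)) × ℝ × ℝ) →L[ℝ] ℝ × ℝ :=
    (Ds.comp (ContinuousLinearMap.fst ℝ (EuclideanSpace ℝ (Fin (m - 1))) (ℝ × ℝ))).prod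
      ((ContinuousLinearMap.fst ℝ ℝ ℝ).comp (ContinuousLinearMap.snd ℝ (EuclideanSpace ℝ (Fin (m - 1))) (ℝ × ℝ)))
    with hDF
  have hF : HasFDerivAt (fun q : EuclideanSpace ℝ (Fin (m - 1)) × ℝ × ℝ => ((∑ j, (q.1 j) ^ 2 : ℝ), q.2.1)) DF q :=
    HasFDerivAt.prodMk (hs1.comp q (hasFDerivAt_fst)) (hasFDerivAt_snd.fst)
  have hhi : ∀ i, HasFDerivAt (fun q : EuclideanSpace ℝ (Fin (m - 1)) × ℝ × ℝ => h i (∑ j, (q.1 j) ^ 2, q.2.1))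
      ((fderiv ℝ (h i) p).comp DF) q :=
    fun i => (((hsm i).differentiable (by simp)).differentiableAt.hasFDerivAt).comp q hF
  set S : (EuclideanSpace ℝ (Fin (m - 1)) × ℝ × ℝ) →L[ℝ] ℝ :=
    (ContinuousLinearMap.snd ℝ ℝ ℝ).comp (ContinuousLinearMap.snd ℝ (EuclideanSpace ℝ (Fin (m - 1))) (ℝ × ℝ)) with hS
  set D : (EuclideanSpace ℝ (Fin (m - 1)) × ℝ × ℝ) →L[ℝ] ℝ :=
    (∑ i, (∏ j ∈ Finset.univ.erase i, h j p) • ((fderiv ℝ (h i) p).comp DF))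
      - ((2 * q.2.2) • S) with hD
  have hΦ : HasFDerivAt (fun q : EuclideanSpace ℝ (Fin (m - 1)) × ℝ × ℝ =>
      (∏ i, h i (∑ j, (q.1 j) ^ 2, q.2.1)) - q.2.2 ^ 2) D q := by
    apply HasFDerivAt.sub
    · exact HasFDerivAt.finset_prod (fun i _ => hhi i)
    · have h2 : HasFDerivAt (fun q : EuclideanSpace ℝ (Fin (m - 1)) × ℝ × ℝ => q.2.2) S q := hasFDerivAt_snd.snd
      have := h2.fun_mul h2
      have heq : (fun q : EuclideanSpace ℝ (Fin (m - 1)) × ℝ × ℝ => q.2.2 * q.2.2) = fun q : EuclideanSpace ℝ (Fin (m - 1)) × ℝ × ℝ => q.2.2 ^ 2 := by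
        ext a; ring
      rw [heq] at this
      simpa [two_mul, add_smul, smul_smul] using this
  rw [hΦ.fderiv]
  intro h0
  -- general evaluation of D
  have hDapp : ∀ v : EuclideanSpace ℝ (Fin (m - 1)) × ℝ × ℝ, D v =
      (∑ i, (∏ j ∈ Finset.univ.erase i, h j p) * (fderiv ℝ (h i) p (Ds v.1, v.2.1)))
        - 2 * q.2.2 * v.2.2 := by
    intro v
    simp [hD, hDF, hS, ContinuousLinearMap.sum_apply, smul_eq_mul]
  have hDzero : ∀ v : EuclideanSpace ℝ (Fin (m - 1)) × ℝ × ℝ, D v = 0 := by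
    intro v; rw [h0]; rfl
  have hprod : q.2.2 ^ 2 = ∏ i, h i p := by
    have := hq
    rw [hp] at *
    linarith [hq]
  by_cases hx : q.2.2 = 0
  · -- the product vanishes, pick the vanishing factor
    have hP0 : ∏ i, h i p = 0 := by rw [← hprod, hx]; ring
    obtain ⟨i₀, -, hi0⟩ := Finset.prod_eq_zero_iff.mp hP0
    have hK : (∏ j ∈ Finset.univ.erase i₀, h j p) ≠ 0 := by
      rw [Finset.prod_ne_zero_iff]
      intro j hj
      exact hdisj i₀ j (fun e => (Finset.mem_erase.mp hj).1 e.symm) p hi0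
    obtain ⟨w, hw⟩ : ∃ w : ℝ × ℝ, fderiv ℝ (h i₀) p w ≠ 0 := by
      by_contra hc
      push_neg at hc
      exact hreg i₀ p hi0 (ContinuousLinearMap.ext fun w => by simpa using hc w)
    have hspos : 0 < ∑ j, (q.1 j) ^ 2 := hpos i₀ p hi0
    obtain ⟨k, hk⟩ : ∃ k, q.1 k ≠ 0 := by
      by_contra hc
      push_neg at hc
      simp only [hc] at hspos
      simp at hspos
    -- the vector realizing (w.1, w.2)
    set v : EuclideanSpace ℝ (Fin (m - 1)) × ℝ × ℝ :=
      ((EuclideanSpace.single k (w.1 / (2 * q.1 k)) : EuclideanSpace ℝ (Fin (m-1))), w.2, 0)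
      with hv
    have hDsv : Ds v.1 = w.1 := by
      rw [hDs]
      simp only [ContinuousLinearMap.sum_apply, ContinuousLinearMap.smul_apply,
        smul_eq_mul]
      have : ∀ j, (2 : ℝ) * q.1 j * (EuclideanSpace.proj (𝕜 := ℝ) j) v.1
          = if j = k then 2 * q.1 k * (w.1 / (2 * q.1 k)) else 0 := by
        intro j
        by_cases hjk : j = k
        · subst hjk; simp [hv, EuclideanSpace.single_apply]
        · simp [hv, EuclideanSpace.single_apply, hjk]
      rw [Finset.sum_congr rfl (fun j _ => this j)]
      rw [Finset.sum_ite_eq' Finset.univ k]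
      simp only [Finset.mem_univ, if_true]
      field_simp
    have h1 := hDzero v
    rw [hDapp v] at h1
    have hv21 : v.2.1 = w.2 := rfl
    have hv22 : v.2.2 = 0 := rfl
    rw [hDsv, hv21, hv22] at h1
    have hpair : ((w.1 : ℝ), w.2) = w := rfl
    rw [hpair] at h1
    have hsum : (∑ i, (∏ j ∈ Finset.univ.erase i, h j p) * (fderiv ℝ (h i) p w))
        = (∏ j ∈ Finset.univ.erase i₀, h j p) * (fderiv ℝ (h i₀) p w) := by
      apply Finset.sum_eq_single
      · intro i _ hii
        have : i₀ ∈ Finset.univ.erase i := Finset.mem_erase.mpr ⟨fun e => hii e.symm, Finset.mem_univ _⟩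
        rw [Finset.prod_eq_zero this hi0]
        ring
      · intro hne; exact absurd (Finset.mem_univ i₀) hne
    rw [hsum] at h1
    have : (∏ j ∈ Finset.univ.erase i₀, h j p) * (fderiv ℝ (h i₀) p w) ≠ 0 :=
      mul_ne_zero hK hw
    apply this
    linarith
  · -- q.2.2 ≠ 0 : use the last coordinate direction
    have h1 := hDzero ((0 : EuclideanSpace ℝ (Fin (m - 1))), (0 : ℝ), (1 : ℝ))
    rw [hDapp _] at h1
    simp only [map_zero, Prod.mk_zero_zero, mul_zero, Finset.sum_const_zero, mul_one,
      zero_sub, neg_eq_zero] at h1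
    exact hx (by linarith)
end

section
/- Let m ≥ 3 be an integer, let I and I' be finite index sets with I nonempty, let h_i : ℝ² → ℝ (i ∈ I) and h_{S,i'} : ℝ^m → ℝ (i' ∈ I') be smooth functions. Define g_i : ℝ^m → ℝ by g_i(x₁,…,x_m) = h_i(Σ_{j=1}^{m−1} x_j², x_m). Assume: the zero sets of the functions in the combined family {g_i}_{i ∈ I} ∪ {h_{S,i'}}_{i' ∈ I'} are pairwise disjoint; each zero set of h_i (i ∈ I) in ℝ² is contained in {(s,t) | s > 0} and h_i has nonzero Fréchet derivative at each of its zeros; and each h_{S,i'} has nonzero Fréchet derivative at each of its zeros. Define Φ : ℝ^{m+1} → ℝ by Φ(x₁,…,x_{m+1}) = (∏_{i ∈ I} h_i(Σ_{j=1}^{m−1} x_j², x_m)) · (∏_{i' ∈ I'} h_{S,i'}(x₁,…,x_m)) − x_{m+1}². Then Φ has nonzero Fréchet derivative at every point of its zero set Φ⁻¹({0}). -/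
/-- Regularity content of Main Theorem 2: with `gᵢ(x) = hᵢ(Σ_{j=1}^{m-1} x_j², x_m)`
on `ℝ^m ≅ ℝ^{m-1} × ℝ` and additional factors `h_{S,i'} : ℝ^m → ℝ`, if the zero sets
of the combined family `{gᵢ} ∪ {h_{S,i'}}` are pairwise disjoint, the zero sets of
the `hᵢ` lie in `{s > 0}` with `hᵢ` regular along them, and each `h_{S,i'}` is
regular along its zero set, then
`Φ(x₁,…,x_{m+1}) = (∏ᵢ hᵢ(Σ x_j², x_m))·(∏_{i'} h_{S,i'}(x₁,…,x_m)) − x_{m+1}²`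
has nonzero derivative at every point of its zero set
(identifying `ℝ^{m+1} ≅ (ℝ^{m-1} × ℝ) × ℝ`). -/
theorem stmt_9 (m : ℕ) (hm : 3 ≤ m)
    {ι : Type*} [Fintype ι] [Nonempty ι] {ι' : Type*} [Fintype ι']
    (h : ι → ℝ × ℝ → ℝ) (hsm : ∀ i, ContDiff ℝ (⊤ : ℕ∞) (h i))
    (hS : ι' → (EuclideanSpace ℝ (Fin (m - 1)) × ℝ) → ℝ)
    (hSsm : ∀ i', ContDiff ℝ (⊤ : ℕ∞) (hS i'))
    (hdisj₁ : ∀ i i', i ≠ i' → ∀ x : EuclideanSpace ℝ (Fin (m - 1)) × ℝ,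
      h i (∑ j, (x.1 j) ^ 2, x.2) = 0 → h i' (∑ j, (x.1 j) ^ 2, x.2) ≠ 0)
    (hdisj₂ : ∀ (i : ι) (i' : ι') (x : EuclideanSpace ℝ (Fin (m - 1)) × ℝ),
      h i (∑ j, (x.1 j) ^ 2, x.2) = 0 → hS i' x ≠ 0)
    (hdisj₃ : ∀ i' i'', i' ≠ i'' → ∀ x : EuclideanSpace ℝ (Fin (m - 1)) × ℝ,
      hS i' x = 0 → hS i'' x ≠ 0)
    (hpos : ∀ i (p : ℝ × ℝ), h i p = 0 → 0 < p.1)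
    (hreg : ∀ i (p : ℝ × ℝ), h i p = 0 → fderiv ℝ (h i) p ≠ 0)
    (hSreg : ∀ i' (x : EuclideanSpace ℝ (Fin (m - 1)) × ℝ),
      hS i' x = 0 → fderiv ℝ (hS i') x ≠ 0) :
    ∀ q : (EuclideanSpace ℝ (Fin (m - 1)) × ℝ) × ℝ,
      (∏ i, h i (∑ j, (q.1.1 j) ^ 2, q.1.2)) * (∏ i', hS i' q.1) - q.2 ^ 2 = 0 →
      fderiv ℝ (fun q : (EuclideanSpace ℝ (Fin (m - 1)) × ℝ) × ℝ =>
        (∏ i, h i (∑ j, (q.1.1 j) ^ 2, q.1.2)) * (∏ i', hS i' q.1) - q.2 ^ 2) q ≠ 0 := by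
  classical
  intro q hq
  set x : EuclideanSpace ℝ (Fin (m - 1)) × ℝ := q.1 with hx
  set t : ℝ := q.2 with ht
  -- combined family indexed by ι ⊕ ι'
  set f : ι ⊕ ι' → (EuclideanSpace ℝ (Fin (m - 1)) × ℝ) → ℝ := fun k => Sum.elim
    (fun i (y : EuclideanSpace ℝ (Fin (m - 1)) × ℝ) => h i (∑ j, (y.1 j) ^ 2, y.2)) (fun i' y => hS i' y) k with hf
  -- the squaring map φ
  have hφ : ∀ y : EuclideanSpace ℝ (Fin (m - 1)) × ℝ, HasFDerivAt (fun y : EuclideanSpace ℝ (Fin (m - 1)) × ℝ => ((∑ j, (y.1 j) ^ 2, y.2) : ℝ × ℝ))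
      (((∑ j, (2 * y.1 j) • ((EuclideanSpace.proj j).comp (ContinuousLinearMap.fst ℝ (EuclideanSpace ℝ (Fin (m - 1))) ℝ))) :
        (EuclideanSpace ℝ (Fin (m - 1)) × ℝ) →L[ℝ] ℝ).prod (ContinuousLinearMap.snd ℝ (EuclideanSpace ℝ (Fin (m - 1))) ℝ)) y := by
    intro y
    refine HasFDerivAt.prodMk (HasFDerivAt.fun_sum fun j _ => ?_) (hasFDerivAt_snd)
    have h1 : HasFDerivAt (fun y : EuclideanSpace ℝ (Fin (m - 1)) × ℝ => y.1 j)
        ((EuclideanSpace.proj j).comp (ContinuousLinearMap.fst ℝ (EuclideanSpace ℝ (Fin (m - 1))) ℝ)) y :=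
      ((EuclideanSpace.proj (𝕜 := ℝ) j).comp (ContinuousLinearMap.fst ℝ (EuclideanSpace ℝ (Fin (m - 1))) ℝ)).hasFDerivAt
    have h2 := h1.mul h1
    refine (h2.congr_fderiv ?_).congr_of_eventuallyEq (Filter.Eventually.of_forall fun z => ?_)
    · rw [two_mul, add_smul]
    · simp [pow_two]
  -- each f k is differentiable
  have hfd : ∀ k (y : EuclideanSpace ℝ (Fin (m - 1)) × ℝ), DifferentiableAt ℝ (f k) y := by
    rintro (i | i') y
    · exact (((hsm i).differentiable (by simp)).differentiableAt).comp y ((hφ y).differentiableAt)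
    · exact ((hSsm i').differentiable (by simp)).differentiableAt
  -- derivative of the product part
  set P : (EuclideanSpace ℝ (Fin (m - 1)) × ℝ) → ℝ := fun y => ∏ k, f k y with hP
  have hPeq : ∀ y : EuclideanSpace ℝ (Fin (m - 1)) × ℝ,
      (∏ i, h i (∑ j, (y.1 j) ^ 2, y.2)) * (∏ i', hS i' y) = P y := by
    intro y; simp only [hP]; rw [Fintype.prod_sum_type]; rfl
  set D : (ι ⊕ ι') → ((EuclideanSpace ℝ (Fin (m - 1)) × ℝ) →L[ℝ] ℝ) := fun k => fderiv ℝ (f k) x with hD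
  have hPd : HasFDerivAt P (∑ k, (∏ j ∈ Finset.univ.erase k, f j x) • D k) x := by
    exact HasFDerivAt.finset_prod (fun k _ => (hfd k x).hasFDerivAt)
  set DP : (EuclideanSpace ℝ (Fin (m - 1)) × ℝ) →L[ℝ] ℝ := ∑ k, (∏ j ∈ Finset.univ.erase k, f j x) • D k with hDP
  -- derivative of the whole Φ
  have hΦ : HasFDerivAt (fun q : (EuclideanSpace ℝ (Fin (m - 1)) × ℝ) × ℝ =>
      (∏ i, h i (∑ j, (q.1.1 j) ^ 2, q.1.2)) * (∏ i', hS i' q.1) - q.2 ^ 2)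
      (DP.comp (ContinuousLinearMap.fst ℝ (EuclideanSpace ℝ (Fin (m - 1)) × ℝ) ℝ) -
        (2 * t) • (ContinuousLinearMap.snd ℝ (EuclideanSpace ℝ (Fin (m - 1)) × ℝ) ℝ)) q := by
    have h1 : HasFDerivAt (fun q : (EuclideanSpace ℝ (Fin (m - 1)) × ℝ) × ℝ => P q.1)
        (DP.comp (ContinuousLinearMap.fst ℝ (EuclideanSpace ℝ (Fin (m - 1)) × ℝ) ℝ)) q :=
      by have := hPd.comp (g := P) q (hasFDerivAt_fst (𝕜 := ℝ) (p := q)); exact this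
    have h2 : HasFDerivAt (fun q : (EuclideanSpace ℝ (Fin (m - 1)) × ℝ) × ℝ => q.2 ^ 2)
        ((2 * t) • (ContinuousLinearMap.snd ℝ (EuclideanSpace ℝ (Fin (m - 1)) × ℝ) ℝ)) q := by
      have h3 := (hasFDerivAt_snd (𝕜 := ℝ) (E := EuclideanSpace ℝ (Fin (m - 1)) × ℝ) (F := ℝ) (p := q)).mul
        (hasFDerivAt_snd (𝕜 := ℝ) (E := EuclideanSpace ℝ (Fin (m - 1)) × ℝ) (F := ℝ) (p := q))
      refine (h3.congr_fderiv ?_).congr_of_eventuallyEq (Filter.Eventually.of_forall fun z => ?_)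
      · rw [ht, two_mul, add_smul]
      · simp [pow_two]
    have := h1.sub h2
    refine this.congr_of_eventuallyEq (Filter.Eventually.of_forall fun y => ?_)
    exact congrArg (fun z => z - y.2 ^ 2) (hPeq y.1)
  rw [hΦ.fderiv]
  intro hL0
  -- case on t
  rcases eq_or_ne t 0 with htz | htz
  · -- P x = 0
    rw [hPeq] at hq
    have hPx : P x = 0 := by simpa [htz] using hq
    obtain ⟨k0, -, hk0⟩ := Finset.prod_eq_zero_iff.mp hPx
    -- all other factors nonzero
    have hne : ∀ k, k ≠ k0 → f k x ≠ 0 := by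
      rintro (i | i') hk
      · rcases k0 with i0 | i0'
        · exact hdisj₁ i0 i (fun e => hk (by rw [e])) x hk0
        · intro hz; exact hdisj₂ i i0' x hz hk0
      · rcases k0 with i0 | i0'
        · exact hdisj₂ i0 i' x hk0
        · exact hdisj₃ i0' i' (fun e => hk (by rw [e])) x hk0
    have hc : (∏ j ∈ Finset.univ.erase k0, f j x) ≠ 0 :=
      Finset.prod_ne_zero_iff.mpr fun j hj => hne j (Finset.ne_of_mem_erase hj)
    -- DP = c • D k0
    have hDPeq : DP = (∏ j ∈ Finset.univ.erase k0, f j x) • D k0 := by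
      rw [hDP]
      rw [Finset.sum_eq_single k0]
      · rintro k - hk
        have : (∏ j ∈ Finset.univ.erase k, f j x) = 0 :=
          Finset.prod_eq_zero (Finset.mem_erase.mpr ⟨Ne.symm hk, Finset.mem_univ k0⟩) hk0
        rw [this, zero_smul]
      · intro hk; exact absurd (Finset.mem_univ k0) hk
    -- D k0 ≠ 0
    have hDk0 : D k0 ≠ 0 := by
      rcases k0 with i | i'
      · -- chain rule case
        set p : ℝ × ℝ := (∑ j, (x.1 j) ^ 2, x.2) with hp
        have hz : h i p = 0 := hk0
        have hSpos : (0 : ℝ) < ∑ j, (x.1 j) ^ 2 := hpos i p hz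
        have hL : fderiv ℝ (h i) p ≠ 0 := hreg i p hz
        obtain ⟨u, hu⟩ : ∃ u, fderiv ℝ (h i) p u ≠ 0 := by
          by_contra hcon
          push_neg at hcon
          exact hL (ContinuousLinearMap.ext fun u => by simp [hcon u])
        have hcomp : HasFDerivAt (f (Sum.inl i))
            ((fderiv ℝ (h i) p).comp
              (((∑ j, (2 * x.1 j) • ((EuclideanSpace.proj j).comp
                (ContinuousLinearMap.fst ℝ (EuclideanSpace ℝ (Fin (m - 1))) ℝ))) : (EuclideanSpace ℝ (Fin (m - 1)) × ℝ) →L[ℝ] ℝ).prod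
                (ContinuousLinearMap.snd ℝ (EuclideanSpace ℝ (Fin (m - 1))) ℝ))) x :=
          HasFDerivAt.comp x (((hsm i).differentiable (by simp) p).hasFDerivAt) (hφ x)
        have hDeq := hcomp.fderiv
        simp only [hD]
        intro hzero
        rw [hzero] at hDeq
        set S : ℝ := ∑ j, (x.1 j) ^ 2 with hSdef
        set v : EuclideanSpace ℝ (Fin (m - 1)) × ℝ := ((u.1 / (2 * S)) • x.1, u.2) with hv
        have hev := congrArg (fun L : (EuclideanSpace ℝ (Fin (m - 1)) × ℝ) →L[ℝ] ℝ => L v) hDeq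
        simp only [ContinuousLinearMap.zero_apply, ContinuousLinearMap.comp_apply,
          ContinuousLinearMap.prod_apply, ContinuousLinearMap.coe_snd'] at hev
        have hsum : ((∑ j, (2 * x.1 j) • ((EuclideanSpace.proj j).comp
            (ContinuousLinearMap.fst ℝ (EuclideanSpace ℝ (Fin (m - 1))) ℝ)) : (EuclideanSpace ℝ (Fin (m - 1)) × ℝ) →L[ℝ] ℝ) v) = u.1 := by
          rw [ContinuousLinearMap.sum_apply]
          have : ∀ j, ((2 * x.1 j) • ((EuclideanSpace.proj j).comp
              (ContinuousLinearMap.fst ℝ (EuclideanSpace ℝ (Fin (m - 1))) ℝ)) : (EuclideanSpace ℝ (Fin (m - 1)) × ℝ) →L[ℝ] ℝ) v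
              = (u.1 / S) * (x.1 j) ^ 2 := by
            intro j
            simp only [ContinuousLinearMap.smul_apply, ContinuousLinearMap.comp_apply,
              ContinuousLinearMap.coe_fst', PiLp.proj_apply, hv,
              PiLp.smul_apply, smul_eq_mul]
            field_simp
          rw [Finset.sum_congr rfl fun j _ => this j, ← Finset.mul_sum, ← hSdef,
            div_mul_cancel₀ _ (ne_of_gt hSpos)]
        rw [hsum] at hev
        exact hu (by simpa using hev.symm)
      · exact hSreg i' x hk0
    -- contradiction: evaluate at (w, 0)
    obtain ⟨w, hw⟩ : ∃ w, D k0 w ≠ 0 := by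
      by_contra hcon
      push_neg at hcon
      exact hDk0 (ContinuousLinearMap.ext fun w => by simp [hcon w])
    have := congrArg (fun L : ((EuclideanSpace ℝ (Fin (m - 1)) × ℝ) × ℝ) →L[ℝ] ℝ => L (w, 0)) hL0
    simp only [ContinuousLinearMap.sub_apply, ContinuousLinearMap.comp_apply,
      ContinuousLinearMap.coe_fst', ContinuousLinearMap.smul_apply,
      ContinuousLinearMap.coe_snd', ContinuousLinearMap.zero_apply, smul_eq_mul,
      mul_zero, sub_zero] at this
    rw [hDPeq] at this
    simp only [ContinuousLinearMap.smul_apply, smul_eq_mul] at this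
    exact (mul_ne_zero hc hw) this
  · -- t ≠ 0: evaluate at (0, 1)
    have := congrArg (fun L : ((EuclideanSpace ℝ (Fin (m - 1)) × ℝ) × ℝ) →L[ℝ] ℝ => L (0, 1)) hL0
    simp only [ContinuousLinearMap.sub_apply, ContinuousLinearMap.comp_apply,
      ContinuousLinearMap.coe_fst', ContinuousLinearMap.smul_apply,
      ContinuousLinearMap.coe_snd', ContinuousLinearMap.zero_apply, smul_eq_mul,
      mul_one, map_zero, zero_sub, neg_eq_zero] at this
    exact (mul_ne_zero two_ne_zero htz) this
end
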